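/- Let x, y, z, u ∈ H and suppose the matrix coefficient s ↦ ⟨y, ω(s)z⟩ is μ-integrable. Then the function s ↦ ⟨ω(s)y, z⟩·conj(⟨ω(s)x, u⟩) is μ-integrable, the Bochner integral ∫_G ⟨y, ω(s)z⟩·ω(s⁻¹)x dμ(s) exists, and ⟨u, ∫_G ⟨y, ω(s)z⟩·ω(s⁻¹)x dμ(s)⟩ = ∫_G ⟨ω(s)y, z⟩·conj(⟨ω(s)x, u⟩) dμ(s). (This identity computes, at the level of the Hilbert space, the pairing of u against the rank-one module operator T_{x,y}(z) = x·⟨y, z⟩_G, and is the computation by which the local Siegel–Weil formula shows that the image of C*(G') contains all compact module operators on the oscillator bimodule.) -/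

import Mathlib

open MeasureTheory
open scoped InnerProductSpace

/-- Let `G` be a second countable, unimodular, locally compact Hausdorff group
with Haar measure `μ`, and `(ω, H)` a strongly continuous unitary representation. Let
`x, y, z, u ∈ H` with `s ↦ ⟨y, ω(s)z⟩` `μ`-integrable. Then
`s ↦ ⟨ω(s)y, z⟩·conj(⟨ω(s)x, u⟩)` is `μ`-integrable, the Bochner integral
`∫_G ⟨y, ω(s)z⟩·ω(s⁻¹)x dμ(s)` exists, and
`⟨u, ∫_G ⟨y, ω(s)z⟩·ω(s⁻¹)x dμ(s)⟩ = ∫_G ⟨ω(s)y, z⟩·conj(⟨ω(s)x, u⟩) dμ(s)`. -/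
theorem stmt_12
    {G : Type*} [Group G] [TopologicalSpace G] [IsTopologicalGroup G]
    [LocallyCompactSpace G] [T2Space G] [SecondCountableTopology G]
    [MeasurableSpace G] [BorelSpace G]
    (μ : Measure G) [μ.IsHaarMeasure] [μ.IsMulRightInvariant] [μ.IsInvInvariant]
    {H : Type*} [NormedAddCommGroup H] [InnerProductSpace ℂ H] [CompleteSpace H]
    (ω : G → H →L[ℂ] H)
    (hω_one : ω 1 = 1)
    (hω_mul : ∀ g h : G, ω (g * h) = (ω g).comp (ω h))
    (hω_unitary : ∀ (g : G) (a b : H), ⟪ω g a, ω g b⟫_ℂ = ⟪a, b⟫_ℂ)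
    (hω_cont : ∀ a : H, Continuous fun g : G => ω g a)
    (x y z u : H) (hint : Integrable (fun s : G => ⟪y, ω s z⟫_ℂ) μ) :
    Integrable (fun s : G => ⟪ω s y, z⟫_ℂ * (starRingEnd ℂ) ⟪ω s x, u⟫_ℂ) μ ∧
    Integrable (fun s : G => ⟪y, ω s z⟫_ℂ • ω s⁻¹ x) μ ∧
    ⟪u, ∫ s, ⟪y, ω s z⟫_ℂ • ω s⁻¹ x ∂μ⟫_ℂ =
      ∫ s, ⟪ω s y, z⟫_ℂ * (starRingEnd ℂ) ⟪ω s x, u⟫_ℂ ∂μ := by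
  -- ω s⁻¹ (ω s a) = a
  have hinv : ∀ (s : G) (a : H), ω s⁻¹ (ω s a) = a := by
    intro s a
    have := congrArg (fun T : H →L[ℂ] H => T a) (hω_mul s⁻¹ s)
    simp only [inv_mul_cancel, hω_one] at this
    simpa using this.symm
  -- ⟪ω s a, b⟫ = ⟪a, ω s⁻¹ b⟫
  have hadj : ∀ (s : G) (a b : H), ⟪ω s a, b⟫_ℂ = ⟪a, ω s⁻¹ b⟫_ℂ := by
    intro s a b
    calc ⟪ω s a, b⟫_ℂ = ⟪ω s⁻¹ (ω s a), ω s⁻¹ b⟫_ℂ := (hω_unitary s⁻¹ _ _).symm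
    _ = ⟪a, ω s⁻¹ b⟫_ℂ := by rw [hinv]
  have hnorm : ∀ (s : G) (a : H), ‖ω s a‖ = ‖a‖ := by
    intro s a
    have h := hω_unitary s a a
    rw [inner_self_eq_norm_sq_to_K, inner_self_eq_norm_sq_to_K] at h
    have h' : ‖ω s a‖ ^ 2 = ‖a‖ ^ 2 := by exact_mod_cast congrArg Complex.re h
    nlinarith [norm_nonneg (ω s a), norm_nonneg a]
  -- integrability of s ↦ ⟪y, ω s⁻¹ z⟫
  have hint' : Integrable (fun s : G => ⟪y, ω s⁻¹ z⟫_ℂ) μ := hint.comp_inv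
  have hcont1 : Continuous fun s : G => ⟪ω s y, z⟫_ℂ :=
    Continuous.inner (hω_cont y) continuous_const
  have hcont2 : Continuous fun s : G => (starRingEnd ℂ) ⟪ω s x, u⟫_ℂ :=
    Complex.continuous_conj.comp (Continuous.inner (hω_cont x) continuous_const)
  have h1 : Integrable (fun s : G => ⟪ω s y, z⟫_ℂ * (starRingEnd ℂ) ⟪ω s x, u⟫_ℂ) μ := by
    have : Integrable (fun s : G => ⟪ω s y, z⟫_ℂ) μ := by
      simpa only [hadj] using hint'
    have := Integrable.bdd_mul this hcont2.aestronglyMeasurable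
      (c := ‖x‖ * ‖u‖) (Filter.Eventually.of_forall fun s => by
        simpa [hnorm, mul_comm] using norm_inner_le_norm (𝕜 := ℂ) u (ω s x))
    simpa [mul_comm] using this
  have h2 : Integrable (fun s : G => ⟪y, ω s z⟫_ℂ • ω s⁻¹ x) μ := by
    refine Integrable.mono' (hint.norm.mul_const ‖x‖)
      (Continuous.aestronglyMeasurable ?_) (Filter.Eventually.of_forall fun s => ?_)
    · exact Continuous.smul (Continuous.inner continuous_const (hω_cont z))
        ((hω_cont x).comp continuous_inv)
    · rw [norm_smul, hnorm]
  refine ⟨h1, h2, ?_⟩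
  rw [← integral_inner h2 u]
  have key : ∀ s : G, ⟪u, ⟪y, ω s z⟫_ℂ • ω s⁻¹ x⟫_ℂ =
      ⟪y, ω s z⟫_ℂ * ⟪u, ω s⁻¹ x⟫_ℂ := fun s => inner_smul_right _ _ _
  simp_rw [key]
  rw [← integral_inv_eq_self (fun s => ⟪y, ω s z⟫_ℂ * ⟪u, ω s⁻¹ x⟫_ℂ) μ]
  congr 1
  funext s
  rw [hadj s y z, inner_conj_symm, inv_inv]
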